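/- In the Prisoner's Dilemma game (two players, actions {C, D}, utilities U(C,C) = (0.6, 0.6), U(C,D) = (0, 1), U(D,C) = (1, 0), U(D,D) = (0.2, 0.2)) with coalition family 𝒮 = {{1}, {2}, {1,2}} (all nonempty subsets of players), the joint strategy π* = ½·δ_{(C,D)} + ½·δ_{(D,C)} is a Minimum Average-Strong Equilibrium: its coalition exploitability equals 0.1, and every joint strategy π ∈ Δ({C,D}²) has coalition exploitability at least 0.1. -/

import Mathlib

open Finset

/-- A probability distribution on a finite type. -/
def IsDist {X : Type*} [Fintype X] (p : X → ℝ) : Prop :=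
  (∀ x, 0 ≤ p x) ∧ ∑ x, p x = 1

/-- The joint action obtained from `a` by replacing its `S`-coordinates with those of `dev`. -/
def replaceProfile {N : ℕ} {A : Fin N → Type} (S : Finset (Fin N))
    (dev a : (i : Fin N) → A i) : (i : Fin N) → A i :=
  fun i => if i ∈ S then dev i else a i

/-- Coalition exploitability of a joint strategy. -/
noncomputable def CE {N : ℕ} {A : Fin N → Type} [∀ i, Fintype (A i)]
    (U : Fin N → ((i : Fin N) → A i) → ℝ) (𝒮 : Finset (Finset (Fin N)))
    (π : ((i : Fin N) → A i) → ℝ) : ℝ :=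
  sSup {x | ∃ S ∈ 𝒮, ∃ dev : (i : Fin N) → A i,
    x = (S.card : ℝ)⁻¹ * ∑ i ∈ S, ∑ a, π a * (U i (replaceProfile S dev a) - U i a)}

/-- Utility of player `i` in the Prisoner's Dilemma (`false` = Confess, `true` = Defect):
U(C,C) = (0.6, 0.6), U(C,D) = (0, 1), U(D,C) = (1, 0), U(D,D) = (0.2, 0.2). -/
noncomputable def pdU (i : Fin 2) (a : Fin 2 → Bool) : ℝ :=
  if a i = false then (if a (i + 1) = false then 0.6 else 0)
  else (if a (i + 1) = false then 1 else 0.2)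

/-- The joint strategy `π* = ½·δ_{(C,D)} + ½·δ_{(D,C)}`. -/
noncomputable def pdStar : (Fin 2 → Bool) → ℝ := fun a =>
  (1 / 2 : ℝ) * (if a = ![false, true] then 1 else 0) +
    (1 / 2 : ℝ) * (if a = ![true, false] then 1 else 0)

lemma sum4 (f : (Fin 2 → Bool) → ℝ) :
    ∑ a, f a = f ![false,false] + f ![false,true] + f ![true,false] + f ![true,true] := by
  rw [← Equiv.sum_comp (finTwoArrowEquiv Bool).symm]
  simp [Fintype.sum_prod_type, finTwoArrowEquiv]
  ring

noncomputable def pdVal (π : (Fin 2 → Bool) → ℝ) (S : Finset (Fin 2)) (dev : Fin 2 → Bool) : ℝ :=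
  (S.card : ℝ)⁻¹ * ∑ i ∈ S, ∑ a, π a * (pdU i (replaceProfile S dev a) - pdU i a)

lemma valA_t (π : (Fin 2 → Bool) → ℝ) (dev : Fin 2 → Bool) (h : dev 0 = true) :
    pdVal π {0} dev = 0.4 * π ![false,false] + 0.2 * π ![false,true] := by
  simp only [pdVal, Finset.sum_singleton, sum4]
  simp [pdU, replaceProfile, h, show ((0:Fin 2)+1) = 1 from rfl]
  norm_num; ring

lemma valA_f (π : (Fin 2 → Bool) → ℝ) (dev : Fin 2 → Bool) (h : dev 0 = false) :
    pdVal π {0} dev = -(0.4 * π ![true,false]) - 0.2 * π ![true,true] := by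
  simp only [pdVal, Finset.sum_singleton, sum4]
  simp [pdU, replaceProfile, h, show ((0:Fin 2)+1) = 1 from rfl]
  norm_num; ring

lemma valB_t (π : (Fin 2 → Bool) → ℝ) (dev : Fin 2 → Bool) (h : dev 1 = true) :
    pdVal π {1} dev = 0.4 * π ![false,false] + 0.2 * π ![true,false] := by
  simp only [pdVal, Finset.sum_singleton, sum4]
  simp [pdU, replaceProfile, h, show ((1:Fin 2)+1) = 0 from rfl]
  norm_num; ring

lemma valB_f (π : (Fin 2 → Bool) → ℝ) (dev : Fin 2 → Bool) (h : dev 1 = false) :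
    pdVal π {1} dev = -(0.4 * π ![false,true]) - 0.2 * π ![true,true] := by
  simp only [pdVal, Finset.sum_singleton, sum4]
  simp [pdU, replaceProfile, h, show ((1:Fin 2)+1) = 0 from rfl]
  norm_num; ring

lemma valAB (π : (Fin 2 → Bool) → ℝ) (dev : Fin 2 → Bool) :
    pdVal π {0,1} dev =
      if dev 0 then (if dev 1 then -(0.4 * π ![false,false]) - 0.3 * π ![false,true] - 0.3 * π ![true,false]
        else -(0.1 * π ![false,false]) + 0.3 * π ![true,true])
      else (if dev 1 then -(0.1 * π ![false,false]) + 0.3 * π ![true,true]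
        else 0.1 * π ![false,true] + 0.1 * π ![true,false] + 0.4 * π ![true,true]) := by
  have hc : ({0,1} : Finset (Fin 2)).card = 2 := rfl
  simp only [pdVal, hc, Finset.sum_pair (show (0:Fin 2) ≠ 1 by decide), sum4]
  cases h0 : dev 0 <;> cases h1 : dev 1 <;>
    · simp [pdU, replaceProfile, h0, h1, show ((0:Fin 2)+1) = 1 from rfl,
        show ((1:Fin 2)+1) = 0 from rfl]
      norm_num; ring

lemma pdStar_ff : pdStar ![false,false] = 0 := by
  simp [pdStar, show (![false,false] : Fin 2 → Bool) ≠ ![false,true] by decide,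
    show (![false,false] : Fin 2 → Bool) ≠ ![true,false] by decide]

lemma pdStar_ft : pdStar ![false,true] = 1/2 := by
  simp [pdStar, show (![false,true] : Fin 2 → Bool) ≠ ![true,false] by decide]

lemma pdStar_tf : pdStar ![true,false] = 1/2 := by
  simp [pdStar, show (![true,false] : Fin 2 → Bool) ≠ ![false,true] by decide]

lemma pdStar_tt : pdStar ![true,true] = 0 := by
  simp [pdStar, show (![true,true] : Fin 2 → Bool) ≠ ![false,true] by decide,
    show (![true,true] : Fin 2 → Bool) ≠ ![true,false] by decide]

lemma ce_eq (π : (Fin 2 → Bool) → ℝ) :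
    CE pdU ({{0}, {1}, {0, 1}} : Finset (Finset (Fin 2))) π =
      sSup {x | ∃ S ∈ ({{0}, {1}, {0, 1}} : Finset (Finset (Fin 2))), ∃ dev, x = pdVal π S dev} := rfl

lemma bdd (π : (Fin 2 → Bool) → ℝ) :
    BddAbove {x | ∃ S ∈ ({{0}, {1}, {0, 1}} : Finset (Finset (Fin 2))), ∃ dev, x = pdVal π S dev} := by
  apply Set.Finite.bddAbove
  apply Set.Finite.subset
    (Set.finite_range (fun P : Finset (Fin 2) × (Fin 2 → Bool) => pdVal π P.1 P.2))
  rintro x ⟨S, _, dev, rfl⟩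
  exact ⟨(S, dev), rfl⟩

/-- In the Prisoner's Dilemma with coalition family `{{1},{2},{1,2}}`, the strategy
`π* = ½·δ_{(C,D)} + ½·δ_{(D,C)}` is a Minimum Average-Strong Equilibrium: its coalition
exploitability equals `0.1`, and every joint strategy has coalition exploitability at
least `0.1`. -/
theorem stmt19 :
    CE pdU ({{0}, {1}, {0, 1}} : Finset (Finset (Fin 2))) pdStar = 0.1 ∧
    ∀ π : (Fin 2 → Bool) → ℝ, IsDist π →
      0.1 ≤ CE pdU ({{0}, {1}, {0, 1}} : Finset (Finset (Fin 2))) π := by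
  constructor
  · rw [ce_eq]
    apply le_antisymm
    · apply csSup_le
      · exact ⟨pdVal pdStar {0} (fun _ => true), {0}, by simp, fun _ => true, rfl⟩
      · rintro x ⟨S, hS, dev, rfl⟩
        simp only [Finset.mem_insert, Finset.mem_singleton] at hS
        rcases hS with rfl | rfl | rfl
        · cases h : dev 0
          · rw [valA_f _ _ h, pdStar_tf, pdStar_tt]; norm_num
          · rw [valA_t _ _ h, pdStar_ff, pdStar_ft]; norm_num
        · cases h : dev 1
          · rw [valB_f _ _ h, pdStar_ft, pdStar_tt]; norm_num
          · rw [valB_t _ _ h, pdStar_ff, pdStar_tf]; norm_num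
        · rw [valAB, pdStar_ff, pdStar_ft, pdStar_tf, pdStar_tt]
          cases h0 : dev 0 <;> cases h1 : dev 1 <;> norm_num
    · apply le_csSup (bdd pdStar)
      refine ⟨{0,1}, by simp, fun _ => false, ?_⟩
      rw [valAB, pdStar_ft, pdStar_tf, pdStar_tt]
      norm_num
  · rintro π ⟨hpos, hsum⟩
    rw [sum4] at hsum
    rw [ce_eq]
    set p := π ![false,false]
    set q := π ![false,true]
    set r := π ![true,false]
    set s := π ![true,true]
    have g1 : pdVal π {0} (fun _ => true) = 0.4 * p + 0.2 * q := valA_t π _ rfl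
    have g2 : pdVal π {1} (fun _ => true) = 0.4 * p + 0.2 * r := valB_t π _ rfl
    have g3 : pdVal π {0,1} (fun _ => false) = 0.1 * q + 0.1 * r + 0.4 * s := by
      rw [valAB]; norm_num; rfl
    have key : (0.1 : ℝ) ≤ 0.4 * p + 0.2 * q ∨ (0.1 : ℝ) ≤ 0.4 * p + 0.2 * r ∨
        (0.1 : ℝ) ≤ 0.1 * q + 0.1 * r + 0.4 * s := by
      by_contra hcon
      push_neg at hcon
      obtain ⟨h1, h2, h3⟩ := hcon
      linarith [hpos ![false,false], hpos ![false,true], hpos ![true,false], hpos ![true,true]]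
    rcases key with h | h | h
    · exact h.trans (le_csSup (bdd π) ⟨{0}, by simp, fun _ => true, g1.symm⟩)
    · exact h.trans (le_csSup (bdd π) ⟨{1}, by simp, fun _ => true, g2.symm⟩)
    · exact h.trans (le_csSup (bdd π) ⟨{0,1}, by simp, fun _ => false, g3.symm⟩)
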